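/- Martingale representation property: let Z be a Parisian walk with deterministic starting point Z_0, and suppose the filtration is the natural filtration of Z, i.e. ℱ_t = σ(Z_0, …, Z_t). Then for every complex-valued martingale (X_t)_{t∈ℕ} with respect to (ℱ_t) there exist predictable processes (H_t)_{t≥1} and (K_t)_{t≥1} (i.e. H_t, K_t are ℱ_{t−1}-measurable) such that for all t ∈ ℕ, almost surely X_t = X_0 + Σ_{s=1}^{t} [ H_s (Z_s − Z_{s−1}) + K_s (conj(Z_s) − conj(Z_{s−1})) ]. -/

import Mathlib

open MeasureTheory Complex
open scoped Classical

noncomputable section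

namespace Parisian

/-- The primitive cube root of unity `ζ = (−1 + √3·i)/2`. -/
def zeta : ℂ := (-1 + Real.sqrt 3 * Complex.I) / 2

/-- The lattice `ℤ[ζ] = {a + bζ : a, b ∈ ℤ}` as a subset of `ℂ`. -/
def Zlat : Set ℂ := {z | ∃ a b : ℤ, z = (a : ℂ) + (b : ℂ) * zeta}

/-- The set of admissible steps `{1, ζ, ζ²}`. -/
def steps : Set ℂ := {1, zeta, zeta ^ 2}

/-- The set `P = {0, 1, 1 + ζ}`. -/
def Pset : Set ℂ := {0, 1, 1 + zeta}

/-- Graph distance from the set `P` in `ℤ[ζ]`: the least `n` such that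
`z = p + w₁ + ⋯ + w_n` with `p ∈ P` and each `wᵢ ∈ {1, ζ, ζ²}`. -/
def gdist (z : ℂ) : ℕ :=
  sInf {n : ℕ | ∃ p ∈ Pset, ∃ w : Fin n → ℂ, (∀ i, w i ∈ steps) ∧ z = p + ∑ i, w i}

def A1 : Set ℂ := {z | ∃ k1 k2 : ℤ, z = (k1 : ℂ) + (k2 : ℂ) * zeta ^ 2 ∧ 1 < k2 + 1 ∧ k2 + 1 < k1}
def A2 : Set ℂ := {z | ∃ k1 k2 : ℤ, z = -(k1 : ℂ) * zeta - (k2 : ℂ) ∧ 0 ≤ k2 ∧ k2 < k1}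
def A3 : Set ℂ := {z | ∃ k1 k2 : ℤ, z = -(k1 : ℂ) - (k2 : ℂ) * zeta ∧ 0 < k2 ∧ k2 < k1}
def A4 : Set ℂ := {z | ∃ k1 k2 : ℤ, z = (k1 : ℂ) * zeta + (k2 : ℂ) * zeta ^ 2 ∧ 0 ≤ k2 ∧ k2 < k1}
def A5 : Set ℂ := {z | ∃ k1 k2 : ℤ, z = -(k1 : ℂ) * zeta ^ 2 - (k2 : ℂ) ∧ 1 < k2 + 1 ∧ k2 + 1 < k1}
def A6 : Set ℂ := {z | ∃ k1 k2 : ℤ, z = (k1 : ℂ) + (k2 : ℂ) * zeta ∧ 0 < k2 ∧ k2 < k1}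

def B1 : Set ℂ := {z | ∃ n : ℤ, z = (n : ℂ) ∧ 2 ≤ n}
def B2 : Set ℂ := {z | ∃ n : ℤ, z = (n : ℂ) * zeta - zeta ^ 2 ∧ 1 ≤ n}
def B3 : Set ℂ := {z | ∃ n : ℤ, z = (n : ℂ) * zeta ^ 2 ∧ 1 ≤ n}
def B4 : Set ℂ := {z | ∃ n : ℤ, z = (n : ℂ) ∧ n ≤ -1}
def B5 : Set ℂ := {z | ∃ n : ℤ, z = 1 + (n : ℂ) * zeta ∧ n ≤ -1}
def B6 : Set ℂ := {z | ∃ n : ℤ, z = (n : ℂ) * zeta ^ 2 ∧ n ≤ -2}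

/-- The closure `Ā₁ = A₁ ∪ B₁ ∪ B₅ ∪ {1}`. -/
def Abar1 : Set ℂ := A1 ∪ B1 ∪ B5 ∪ {1}
/-- The closure `Ā₃ = A₃ ∪ B₃ ∪ B₄ ∪ {0}`. -/
def Abar3 : Set ℂ := A3 ∪ B3 ∪ B4 ∪ {0}
/-- The closure `Ā₅ = A₅ ∪ B₂ ∪ B₆ ∪ {1+ζ}`. -/
def Abar5 : Set ℂ := A5 ∪ B2 ∪ B6 ∪ {1 + zeta}

/-- `φ(z) = 1_{Ā₁}(z) + ζ·1_{Ā₃}(z) + ζ²·1_{Ā₅}(z)`. -/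
def phi (z : ℂ) : ℂ :=
  Abar1.indicator 1 z + zeta * Abar3.indicator 1 z + zeta ^ 2 * Abar5.indicator 1 z

/-- `ψ(z) = 1_{A₆}(z) + ζ·1_{A₄}(z) + ζ²·1_{A₂}(z)`. -/
def psi (z : ℂ) : ℂ :=
  A6.indicator 1 z + zeta * A4.indicator 1 z + zeta ^ 2 * A2.indicator 1 z

variable {Ω : Type*} {mΩ : MeasurableSpace Ω}

/-- A Parisian walk: an adapted integrable martingale starting in `ℤ[ζ]` a.s.,
with increments in `{1, ζ, ζ²}` a.s. -/
def IsParisian (μ : Measure Ω) (ℱ : Filtration ℕ mΩ) (Z : ℕ → Ω → ℂ) : Prop :=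
  Martingale Z ℱ μ ∧ (∀ᵐ ω ∂μ, Z 0 ω ∈ Zlat) ∧
    ∀ t : ℕ, ∀ᵐ ω ∂μ, Z (t + 1) ω - Z t ω ∈ steps

/-- The local time of a walk: the number of exits from `Ā₁`, `Ā₃`, `Ā₅` before time `t`. -/
def localTime (Z : ℕ → Ω → ℂ) (t : ℕ) (ω : Ω) : ℕ :=
  ∑ u ∈ Finset.range t,
    ((if Z u ω ∈ Abar1 ∧ Z (u + 1) ω ∉ Abar1 then 1 else 0) +
     (if Z u ω ∈ Abar3 ∧ Z (u + 1) ω ∉ Abar3 then 1 else 0) +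
     (if Z u ω ∈ Abar5 ∧ Z (u + 1) ω ∉ Abar5 then 1 else 0))

/-- `ΔZ_S = ∏_{i : sᵢ = ζ} ΔZᵢ · ∏_{i : sᵢ = ζ²} conj(ΔZᵢ)` where `ΔZᵢ = Zᵢ − Z_{i−1}`,
for a tuple `S : Fin t → ℂ` (with entries in `{1, ζ, ζ²}`). -/
def deltaZS (Z : ℕ → Ω → ℂ) (t : ℕ) (S : Fin t → ℂ) (ω : Ω) : ℂ :=
  ∏ i : Fin t,
    (if S i = zeta then Z ((i : ℕ) + 1) ω - Z (i : ℕ) ω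
     else if S i = zeta ^ 2 then starRingEnd ℂ (Z ((i : ℕ) + 1) ω - Z (i : ℕ) ω)
     else 1)

end Parisian

/-!
Since `ℱ (t+1)` is generated by `ℱ t` and `Z (t+1)`, the Doob–Dynkin lemma writes the increment
`X (t+1) - X t` as `D (Z (t+1) - Z t)`, where each `D w` is `ℱ t`-measurable. Conditionally on
`ℱ t` the step of `Z` has real probabilities `q w` of sum `1` on `{1, ζ, ζ²}` and, `Z` being a
martingale, barycentre `0`; this forces `q w = 1/3`. The martingale property of `X` then gives
`D 1 + D ζ + D ζ² = 0`, and a mean-zero function on the cube roots of unity is a combination of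
`w` and `conj w = w²`, with its discrete Fourier coefficients as weights `H` and `K`.
-/

namespace MeasureTheory

open Filter

section ConditionalExpectation

variable {Ω : Type*} {m mΩ : MeasurableSpace Ω} {μ : Measure Ω}

theorem condExp_comp_eq_sum_condExp_indicator_smul {α E : Type*} [IsFiniteMeasure μ]
    [MeasurableSpace α] [MeasurableSingletonClass α] [NormedAddCommGroup E] [NormedSpace ℝ E]
    [CompleteSpace E] {W : Ω → α} (hW : Measurable W) {S : Finset α}
    (hWS : ∀ᵐ ω ∂μ, W ω ∈ S) {G : α → Ω → E} (hG : ∀ w ∈ S, StronglyMeasurable[m] (G w))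
    (hGW : Integrable (fun ω => G (W ω) ω) μ) :
    μ[fun ω => G (W ω) ω | m]
      =ᵐ[μ] fun ω => ∑ w ∈ S, μ[(W ⁻¹' {w}).indicator (1 : Ω → ℝ) | m] ω • G w ω := by
  have hset (w : α) : MeasurableSet (W ⁻¹' {w}) := hW (measurableSet_singleton w)
  have hterm (w : α) : (W ⁻¹' {w}).indicator (1 : Ω → ℝ) • G w
      = (W ⁻¹' {w}).indicator fun ω => G (W ω) ω := by
    ext ω
    by_cases h : W ω = w <;> simp [Set.indicator, h]
  have hint (w : α) : Integrable ((W ⁻¹' {w}).indicator (1 : Ω → ℝ) • G w) μ := by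
    rw [hterm]
    exact hGW.indicator (hset w)
  have hsplit : (fun ω => G (W ω) ω)
      =ᵐ[μ] ∑ w ∈ S, (W ⁻¹' {w}).indicator (1 : Ω → ℝ) • G w := by
    filter_upwards [hWS] with ω hω
    rw [Finset.sum_apply, Finset.sum_eq_single_of_mem _ hω fun w _ hw => ?_]
    · simp
    · simp [Ne.symm hw]
  have hpull := (eventually_all_finset S).2 fun w hw =>
    condExp_smul_of_aestronglyMeasurable_right (m := m)
      ((integrable_const (1 : ℝ)).indicator (hset w)) (hint w) (hG w hw).aestronglyMeasurable
  filter_upwards [condExp_congr_ae hsplit, condExp_finsetSum (fun w _ => hint w) m, hpull]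
    with ω h₁ h₂ h₃
  rw [h₁, h₂, Finset.sum_apply]
  exact Finset.sum_congr rfl h₃

theorem Martingale.condExp_succ_sub_ae_eq_zero [IsFiniteMeasure μ] {E : Type*}
    [NormedAddCommGroup E] [NormedSpace ℝ E] [CompleteSpace E] {ℱ : Filtration ℕ mΩ} {f : ℕ → Ω → E}
    (hf : Martingale f ℱ μ) (t : ℕ) : μ[f (t + 1) - f t | ℱ t] =ᵐ[μ] 0 := by
  filter_upwards [condExp_sub (hf.integrable (t + 1)) (hf.integrable t) (ℱ t),
    hf.condExp_ae_eq t.le_succ] with ω h₁ h₂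
  rw [h₁, Pi.sub_apply, h₂,
    condExp_of_stronglyMeasurable (ℱ.le t) (hf.stronglyAdapted t) (hf.integrable t)]
  simp

end ConditionalExpectation

section Measurability

variable {Ω β : Type*} {mΩ : MeasurableSpace Ω} [mβ : MeasurableSpace β]

theorem Filtration.succ_le_sup_comap {ℱ : Filtration ℕ mΩ} {Z : ℕ → Ω → β}
    (hnat : ∀ t : ℕ, (ℱ t : MeasurableSpace Ω) = ⨆ s ∈ Set.Iic t, mβ.comap (Z s))
    (t : ℕ) : ℱ (t + 1) ≤ ℱ t ⊔ mβ.comap (Z (t + 1)) := by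
  rw [hnat (t + 1)]
  refine iSup₂_le fun s hs => ?_
  rcases (Set.mem_Iic.1 hs).lt_or_eq with hlt | rfl
  · exact le_sup_of_le_left <| (hnat t).symm ▸ le_iSup₂ (f := fun s (_ : s ∈ Set.Iic t) =>
      mβ.comap (Z s)) s (Nat.lt_succ_iff.1 hlt)
  · exact le_sup_right

theorem StronglyMeasurable.exists_eq_comp_prodMk {E : Type*} [TopologicalSpace E]
    [TopologicalSpace.IsCompletelyMetrizableSpace E] [Nonempty E] {m : MeasurableSpace Ω}
    {Y : Ω → β} {f : Ω → E} (hf : StronglyMeasurable[m ⊔ mβ.comap Y] f) :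
    ∃ Φ : Ω × β → E, StronglyMeasurable[m.prod mβ] Φ ∧ f = fun ω => Φ (ω, Y ω) := by
  have hcomap : (m.prod mβ).comap (fun ω => (ω, Y ω)) = m ⊔ mβ.comap Y := by
    simp only [MeasurableSpace.prod, MeasurableSpace.comap_sup, MeasurableSpace.comap_comp]
    exact congrArg (· ⊔ mβ.comap Y) (MeasurableSpace.comap_id (m := m))
  rw [← hcomap] at hf
  exact hf.exists_eq_measurable_comp

end Measurability

end MeasureTheory

namespace Parisian

lemma zeta_sq_add_zeta_add_one : zeta ^ 2 + zeta + 1 = 0 := by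
  have hs : (Real.sqrt 3 : ℂ) ^ 2 = 3 := by
    rw [← Complex.ofReal_pow, Real.sq_sqrt (by norm_num : (0:ℝ) ≤ 3)]
    norm_num
  unfold zeta
  linear_combination ((Real.sqrt 3 : ℂ) ^ 2 / 4) * Complex.I_sq - hs / 4

lemma conj_zeta : starRingEnd ℂ zeta = zeta ^ 2 := by
  rw [show zeta ^ 2 = -1 - zeta by linear_combination zeta_sq_add_zeta_add_one]
  unfold zeta
  simp only [map_div₀, map_add, map_mul, map_neg, map_one, Complex.conj_I,
    Complex.conj_ofReal, map_ofNat]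
  ring

lemma conj_zeta_sq : starRingEnd ℂ (zeta ^ 2) = zeta := by
  rw [map_pow, conj_zeta]
  linear_combination zeta * (zeta - 1) * zeta_sq_add_zeta_add_one

lemma zeta_re : zeta.re = -1 / 2 := by simp [zeta]

lemma zeta_im : zeta.im = Real.sqrt 3 / 2 := by simp [zeta]

lemma zeta_ne_one : zeta ≠ 1 := by
  intro h
  have hre := zeta_re
  rw [h] at hre
  norm_num at hre

lemma zeta_sq_ne_one : zeta ^ 2 ≠ 1 := by
  intro h
  have h2 : zeta = -2 := by linear_combination zeta_sq_add_zeta_add_one - h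
  have hre := zeta_re
  rw [h2] at hre
  norm_num at hre

lemma zeta_sq_ne_zeta : zeta ^ 2 ≠ zeta := by
  intro h
  have : zeta = -1 / 2 := by linear_combination (zeta_sq_add_zeta_add_one - h) / 2
  have him := zeta_im
  rw [this] at him
  norm_num at him
  exact absurd him.symm (by positivity)

def stepFinset : Finset ℂ := {1, zeta, zeta ^ 2}

lemma coe_stepFinset : (stepFinset : Set ℂ) = steps := by
  simp [stepFinset, steps]

lemma sum_stepFinset {M : Type*} [AddCommMonoid M] (f : ℂ → M) :
    ∑ w ∈ stepFinset, f w = f 1 + f zeta + f (zeta ^ 2) := by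
  rw [stepFinset, Finset.sum_insert (by simp [zeta_ne_one.symm, zeta_sq_ne_one.symm]),
    Finset.sum_pair zeta_sq_ne_zeta.symm, add_assoc]

lemma eq_one_third_of_sum_eq_one_of_sum_smul_eq_zero {q : ℂ → ℝ} (h1 : ∑ w ∈ stepFinset, q w = 1)
    (h2 : ∑ w ∈ stepFinset, q w • w = 0) : ∀ w ∈ stepFinset, q w = 1 / 3 := by
  rw [sum_stepFinset] at h1 h2
  simp only [stepFinset, Finset.mem_insert, Finset.mem_singleton, forall_eq_or_imp, forall_eq]
  rw [show zeta ^ 2 = -1 - zeta by linear_combination zeta_sq_add_zeta_add_one] at h1 h2 ⊢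
  have hre := congrArg Complex.re h2
  have him := congrArg Complex.im h2
  simp only [Complex.add_re, Complex.add_im, Complex.real_smul, Complex.mul_re, Complex.mul_im,
    Complex.ofReal_re, Complex.ofReal_im, Complex.sub_re, Complex.sub_im, Complex.neg_re,
    Complex.neg_im, Complex.one_re, Complex.one_im, zeta_re, zeta_im, Complex.zero_re,
    Complex.zero_im] at hre him
  have hsqrt : Real.sqrt 3 ≠ 0 := by positivity
  have h23 : q zeta = q (-1 - zeta) := by
    have : (q zeta - q (-1 - zeta)) * Real.sqrt 3 = 0 := by linear_combination 2 * him
    simpa [sub_eq_zero, hsqrt] using this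
  refine ⟨?_, ?_, ?_⟩ <;> linarith

def stepCoeff (d : ℂ → ℂ) : ℂ := (∑ w ∈ stepFinset, d w * starRingEnd ℂ w) / 3

def stepConjCoeff (d : ℂ → ℂ) : ℂ := (∑ w ∈ stepFinset, d w * w) / 3

lemma eq_stepCoeff_mul_add_stepConjCoeff_mul_conj {d : ℂ → ℂ}
    (hd : ∑ w ∈ stepFinset, d w = 0) {w : ℂ} (hw : w ∈ steps) :
    d w = stepCoeff d * w + stepConjCoeff d * starRingEnd ℂ w := by
  have hζ := zeta_sq_add_zeta_add_one
  simp only [stepCoeff, stepConjCoeff, sum_stepFinset, map_one, conj_zeta, conj_zeta_sq]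
    at hd ⊢
  rcases hw with rfl | rfl | rfl
  · rw [map_one]; grind
  · rw [conj_zeta]; grind
  · rw [conj_zeta_sq]; grind

section Walk

variable {Ω : Type*} {m mΩ : MeasurableSpace Ω} {μ : Measure Ω} [IsFiniteMeasure μ]

theorem condExp_indicator_ae_eq_one_third (hm : m ≤ mΩ) {W : Ω → ℂ} (hW : Measurable W)
    (hWs : ∀ᵐ ω ∂μ, W ω ∈ steps) (hWint : Integrable W μ) (hW0 : μ[W | m] =ᵐ[μ] 0) :
    ∀ᵐ ω ∂μ, ∀ w ∈ stepFinset, μ[(W ⁻¹' {w}).indicator (1 : Ω → ℝ) | m] ω = 1 / 3 := by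
  have hS : ∀ᵐ ω ∂μ, W ω ∈ stepFinset := by
    simpa only [← coe_stepFinset, Finset.mem_coe] using hWs
  have hsum_one := condExp_comp_eq_sum_condExp_indicator_smul (m := m) hW hS
    (G := fun _ _ => (1 : ℝ)) (fun _ _ => stronglyMeasurable_const) (integrable_const 1)
  have hsum_W := condExp_comp_eq_sum_condExp_indicator_smul (m := m) hW hS
    (G := fun w _ => w) (fun _ _ => stronglyMeasurable_const) hWint
  filter_upwards [hsum_one, hsum_W, hW0] with ω h₁ hW hW0
  apply eq_one_third_of_sum_eq_one_of_sum_smul_eq_zero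
  · rw [condExp_const hm] at h₁
    simpa using h₁.symm
  · rw [← hW, hW0]
    rfl

theorem sum_stepFinset_ae_eq_zero (hm : m ≤ mΩ) {W : Ω → ℂ} (hW : Measurable W)
    (hWs : ∀ᵐ ω ∂μ, W ω ∈ steps) (hWint : Integrable W μ) (hW0 : μ[W | m] =ᵐ[μ] 0)
    {D : ℂ → Ω → ℂ} (hD : ∀ w, StronglyMeasurable[m] (D w))
    (hDint : Integrable (fun ω => D (W ω) ω) μ) (hDW0 : μ[fun ω => D (W ω) ω | m] =ᵐ[μ] 0) :
    ∀ᵐ ω ∂μ, ∑ w ∈ stepFinset, D w ω = 0 := by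
  have hS : ∀ᵐ ω ∂μ, W ω ∈ stepFinset := by
    simpa only [← coe_stepFinset, Finset.mem_coe] using hWs
  filter_upwards [condExp_indicator_ae_eq_one_third hm hW hWs hWint hW0,
    condExp_comp_eq_sum_condExp_indicator_smul hW hS (fun w _ => hD w) hDint, hDW0]
    with ω hq hsum h0
  have : (1 / 3 : ℝ) • ∑ w ∈ stepFinset, D w ω = 0 := by
    rw [Finset.smul_sum, ← Finset.sum_congr rfl fun w hw => congrArg (· • D w ω) (hq w hw),
      ← hsum, h0, Pi.zero_apply]
  simpa using this

end Walk

section Representation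

variable {Ω : Type*} {mΩ : MeasurableSpace Ω} {μ : Measure Ω} [IsFiniteMeasure μ]
  {ℱ : Filtration ℕ mΩ} {Z X : ℕ → Ω → ℂ}

theorem exists_increment_eq (hZ : IsParisian μ ℱ Z)
    (hnat : ∀ t : ℕ, (ℱ t : MeasurableSpace Ω)
      = ⨆ s ∈ Set.Iic t, MeasurableSpace.comap (Z s) inferInstance)
    (hX : Martingale X ℱ μ) (t : ℕ) :
    ∃ H K : Ω → ℂ, StronglyMeasurable[ℱ t] H ∧ StronglyMeasurable[ℱ t] K ∧
      ∀ᵐ ω ∂μ, X (t + 1) ω - X t ω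
        = H ω * (Z (t + 1) ω - Z t ω)
          + K ω * (starRingEnd ℂ (Z (t + 1) ω) - starRingEnd ℂ (Z t ω)) := by
  obtain ⟨hZmart, -, hsteps⟩ := hZ
  have hZm (s : ℕ) : Measurable[ℱ s] (Z s) := (hZmart.stronglyAdapted s).measurable
  have hΔX : StronglyMeasurable[ℱ (t + 1)] (X (t + 1) - X t) :=
    (hX.stronglyAdapted (t + 1)).sub ((hX.stronglyAdapted t).mono (ℱ.mono t.le_succ))
  obtain ⟨Φ, hΦ, hXΦ⟩ := StronglyMeasurable.exists_eq_comp_prodMk (β := ℂ)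
    (hΔX.mono (Filtration.succ_le_sup_comap hnat t))
  set D : ℂ → Ω → ℂ := fun w ω => Φ (ω, Z t ω + w)
  have hD (w : ℂ) : StronglyMeasurable[ℱ t] (D w) :=
    hΦ.comp_measurable (measurable_id.prodMk ((hZm t).add_const w))
  have hXD : (fun ω => D ((Z (t + 1) - Z t) ω) ω) = X (t + 1) - X t := by
    simp only [D, Pi.sub_apply, add_sub_cancel, hXΦ]
  have hD0 : ∀ᵐ ω ∂μ, ∑ w ∈ stepFinset, D w ω = 0 := by
    refine sum_stepFinset_ae_eq_zero (ℱ.le t)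
      (((hZm (t + 1)).mono (ℱ.le _) le_rfl).sub ((hZm t).mono (ℱ.le _) le_rfl))
      (hsteps t) ((hZmart.integrable _).sub (hZmart.integrable _))
      (hZmart.condExp_succ_sub_ae_eq_zero t) hD ?_ ?_
    · rw [hXD]
      exact (hX.integrable _).sub (hX.integrable _)
    · rw [hXD]
      exact hX.condExp_succ_sub_ae_eq_zero t
  have hcoeff (c : ℂ → ℂ) :
      StronglyMeasurable[ℱ t] fun ω => (∑ w ∈ stepFinset, D w ω * c w) / 3 :=
    ((Finset.measurable_fun_sum _ fun w _ => (hD w).measurable.mul_const _).div_const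
      3).stronglyMeasurable
  refine ⟨fun ω => stepCoeff fun w => D w ω, fun ω => stepConjCoeff fun w => D w ω,
    hcoeff _, hcoeff _, ?_⟩
  filter_upwards [hD0, hsteps t] with ω h0 hw
  rw [← Pi.sub_apply, ← hXD, ← map_sub]
  exact eq_stepCoeff_mul_add_stepConjCoeff_mul_conj h0 hw

end Representation

theorem parisian_martingale_representation_general
    {Ω : Type*} {mΩ : MeasurableSpace Ω} (μ : Measure Ω) [IsProbabilityMeasure μ]
    (ℱ : Filtration ℕ mΩ) (Z : ℕ → Ω → ℂ) (hZ : IsParisian μ ℱ Z)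
    (hnat : ∀ t : ℕ, (ℱ t : MeasurableSpace Ω)
      = ⨆ s ∈ Set.Iic t, MeasurableSpace.comap (Z s) inferInstance)
    (X : ℕ → Ω → ℂ) (hX : Martingale X ℱ μ) :
    ∃ H K : ℕ → Ω → ℂ,
      (∀ s : ℕ, StronglyMeasurable[ℱ s] (H (s + 1)) ∧ StronglyMeasurable[ℱ s] (K (s + 1))) ∧
      ∀ t : ℕ, ∀ᵐ ω ∂μ,
        X t ω = X 0 ω + ∑ s ∈ Finset.range t,
          (H (s + 1) ω * (Z (s + 1) ω - Z s ω) +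
           K (s + 1) ω * (starRingEnd ℂ (Z (s + 1) ω) - starRingEnd ℂ (Z s ω))) := by
  choose H K hH hK hincrement using exists_increment_eq hZ hnat hX
  refine ⟨fun s => H (s - 1), fun s => K (s - 1), fun s => ⟨hH s, hK s⟩, fun t => ?_⟩
  filter_upwards [ae_all_iff.2 hincrement] with ω hω
  simp only [Nat.add_sub_cancel, ← hω, Finset.sum_range_sub (fun s => X s ω)]
  ring

/-- **Martingale representation property.** For a Parisian walk `Z` with deterministic
start and natural filtration, every complex-valued martingale `X` is a stochastic
integral with respect to `(Z, conj Z)`: there are predictable `H, K` with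
`X_t = X_0 + Σ_{s=1}^t (H_s ΔZ_s + K_s Δ(conj Z)_s)` a.s. for every `t`. -/
theorem parisian_martingale_representation
    {Ω : Type*} {mΩ : MeasurableSpace Ω} (μ : Measure Ω) [IsProbabilityMeasure μ]
    (ℱ : Filtration ℕ mΩ) (Z : ℕ → Ω → ℂ) (hZ : IsParisian μ ℱ Z)
    (z0 : ℂ) (hz0 : ∀ ω, Z 0 ω = z0)
    (hnat : ∀ t : ℕ, (ℱ t : MeasurableSpace Ω)
      = ⨆ s ∈ Set.Iic t, MeasurableSpace.comap (Z s) inferInstance)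
    (X : ℕ → Ω → ℂ) (hX : Martingale X ℱ μ) :
    ∃ H K : ℕ → Ω → ℂ,
      (∀ s : ℕ, StronglyMeasurable[ℱ s] (H (s + 1)) ∧ StronglyMeasurable[ℱ s] (K (s + 1))) ∧
      ∀ t : ℕ, ∀ᵐ ω ∂μ,
        X t ω = X 0 ω + ∑ s ∈ Finset.range t,
          (H (s + 1) ω * (Z (s + 1) ω - Z s ω) +
           K (s + 1) ω * (starRingEnd ℂ (Z (s + 1) ω) - starRingEnd ℂ (Z s ω))) :=
  parisian_martingale_representation_general μ ℱ Z hZ hnat X hX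

end Parisian
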